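/- arXiv:2205.06730 — 4 statements merged into one kernel-verified Lean document; each statement's English description precedes it below -/
import Mathlib

section
/- The client-sampling variance under a sampling policy with rate r equals a trace of a quadratic form in the selection covariance: E_q[ ‖Δ(S) − v̄‖² ] = Σ_{i=1}^N Σ_{j=1}^N (p_i p_j)/(r_i r_j) ⟨v_i, v_j⟩ · Σ_{ij}, where Σ_{ij} = E[X_i X_j] − r_i r_j is the covariance of the selection indicators. Equivalently, E_q[ ‖Δ(S) − v̄‖² ] = Tr(Y Yᵀ Σ), where Y ∈ ℝ^{N×d} is the matrix whose k-th row is (p_k/r_k) v_k and Σ is the covariance matrix of X. -/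
/-!
Write `X_k(S) = [k ∈ S]`, so that `E[X_k] = r_k`, and `c_k = p_k / r_k`. Since `c_k r_k = p_k`,
`Δ(S) − v̄ = ∑_k (X_k(S) − r_k) c_k v_k` is a sum of centered indicators. Expanding the squared
norm bilinearly and taking the expectation term by term turns each `(X_i − r_i)(X_j − r_j)` into
the covariance `Σ_{ij}`. The trace form is the same double sum, because `(Y Yᵀ)_{ij} = c_i c_j ⟨v_i, v_j⟩`
and `Tr(A B) = ∑_{ij} A_{ij} B_{ij}` for symmetric `A`.
-/

open Finset

section Covariance

variable {Ω ι : Type*} [Fintype Ω] [Fintype ι]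

theorem norm_sum_smul_sq {E : Type*} [NormedAddCommGroup E] [InnerProductSpace ℝ E]
    (a : ι → ℝ) (w : ι → E) :
    ‖∑ k, a k • w k‖ ^ 2 = ∑ i, ∑ j, a i * a j * inner ℝ (w i) (w j) := by
  rw [← real_inner_self_eq_norm_sq, sum_inner]
  refine sum_congr rfl fun i _ => ?_
  rw [inner_sum]
  refine sum_congr rfl fun j _ => ?_
  rw [real_inner_smul_left, real_inner_smul_right, mul_assoc]

theorem sum_mul_sub_mul_sub_eq_sub_mul (q : Ω → ℝ) (hq : ∑ ω, q ω = 1) (x y : Ω → ℝ)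
    {mx my : ℝ} (hx : ∑ ω, q ω * x ω = mx) (hy : ∑ ω, q ω * y ω = my) :
    ∑ ω, q ω * ((x ω - mx) * (y ω - my)) = ∑ ω, q ω * (x ω * y ω) - mx * my := by
  have expand : ∀ ω, q ω * ((x ω - mx) * (y ω - my))
      = q ω * (x ω * y ω) - my * (q ω * x ω) - mx * (q ω * y ω) + mx * my * q ω :=
    fun ω => by ring
  simp only [expand, sum_add_distrib, sum_sub_distrib, ← mul_sum, hq, hx, hy]
  ring

theorem sum_mul_norm_sum_sub_smul_sq {E : Type*} [NormedAddCommGroup E] [InnerProductSpace ℝ E]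
    (q : Ω → ℝ) (hq : ∑ ω, q ω = 1) (X : ι → Ω → ℝ) (m : ι → ℝ)
    (hm : ∀ k, ∑ ω, q ω * X k ω = m k) (w : ι → E) :
    ∑ ω, q ω * ‖∑ k, (X k ω - m k) • w k‖ ^ 2
      = ∑ i, ∑ j, (∑ ω, q ω * (X i ω * X j ω) - m i * m j) * inner ℝ (w i) (w j) := by
  simp only [norm_sum_smul_sq, mul_sum]
  rw [sum_comm]
  refine sum_congr rfl fun i _ => ?_
  rw [sum_comm]
  refine sum_congr rfl fun j _ => ?_
  rw [← sum_mul_sub_mul_sub_eq_sub_mul q hq _ _ (hm i) (hm j), sum_mul]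
  exact sum_congr rfl fun ω _ => by ring

end Covariance

theorem Matrix.trace_mul_of_isSymm {n R : Type*} [Fintype n] [CommSemiring R]
    {A : Matrix n n R} (hA : A.IsSymm) (B : Matrix n n R) :
    (A * B).trace = ∑ i, ∑ j, A i j * B i j := by
  rw [← Matrix.trace_transpose_mul, hA.eq]
  exact sum_congr rfl fun i _ => sum_congr rfl fun j _ => by simp

theorem Matrix.mul_transpose_apply_eq_mul_inner {m n : Type*} [Fintype n] (a : m → ℝ)
    (v : m → EuclideanSpace ℝ n) {Y : Matrix m n ℝ}
    (hY : ∀ k l, Y k l = a k * v k l) (i j : m) :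
    (Y * Y.transpose) i j = a i * a j * inner ℝ (v i) (v j) := by
  simp only [Matrix.mul_apply, Matrix.transpose_apply, hY, PiLp.inner_apply,
    RCLike.inner_apply, conj_trivial, mul_sum]
  exact sum_congr rfl fun l _ => by ring

theorem stmt2_general (N d : ℕ)
    (p : Fin N → ℝ)
    (q : Finset (Fin N) → ℝ)
    (hq1 : ∑ S : Finset (Fin N), q S = 1)
    (v : Fin N → EuclideanSpace ℝ (Fin d))
    (r : Fin N → ℝ)
    (hr : ∀ k, r k = ∑ S ∈ Finset.univ.filter (fun S : Finset (Fin N) => k ∈ S), q S)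
    (hrpos : ∀ k, 0 < r k)
    (Δ : Finset (Fin N) → EuclideanSpace ℝ (Fin d))
    (hΔ : ∀ S, Δ S = ∑ k ∈ S, (p k / r k) • v k)
    (vbar : EuclideanSpace ℝ (Fin d))
    (hvbar : vbar = ∑ k, p k • v k)
    (cov : Matrix (Fin N) (Fin N) ℝ)
    (hcov : ∀ i j, cov i j =
      (∑ S ∈ Finset.univ.filter (fun S : Finset (Fin N) => i ∈ S ∧ j ∈ S), q S)
        - r i * r j)
    (Y : Matrix (Fin N) (Fin d) ℝ)
    (hY : ∀ k l, Y k l = (p k / r k) * v k l) :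
    (∑ S : Finset (Fin N), q S * ‖Δ S - vbar‖ ^ 2)
      = ∑ i, ∑ j, (p i * p j) / (r i * r j) * (inner ℝ (v i) (v j) : ℝ) * cov i j ∧
    (∑ S : Finset (Fin N), q S * ‖Δ S - vbar‖ ^ 2)
      = Matrix.trace (Y * Y.transpose * cov) := by
  set X : Fin N → Finset (Fin N) → ℝ := fun k S => if k ∈ S then 1 else 0
  set c : Fin N → ℝ := fun k => p k / r k
  have hcr : ∀ k, r k * c k = p k := fun k => mul_div_cancel₀ (p k) (hrpos k).ne'
  have mean_X : ∀ k, ∑ S, q S * X k S = r k := fun k => by simp [X, hr, sum_filter]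
  have cov_X : ∀ i j, ∑ S, q S * (X i S * X j S) - r i * r j = cov i j := fun i j => by
    rw [hcov, sum_filter]
    simp_rw [X, ite_zero_mul_ite_zero, mul_ite, mul_one, mul_zero]
  have deviation : ∀ S, Δ S - vbar = ∑ k, (X k S - r k) • (c k • v k) := fun S => by
    simp only [smul_smul, sub_mul, sub_smul, sum_sub_distrib, hcr, hΔ, hvbar, X, ite_mul,
      one_mul, zero_mul, ite_smul, zero_smul, sum_ite_mem, univ_inter]
    rfl
  have variance : ∑ S, q S * ‖Δ S - vbar‖ ^ 2
      = ∑ i, ∑ j, c i * c j * inner ℝ (v i) (v j) * cov i j := by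
    simp only [deviation, sum_mul_norm_sum_sub_smul_sq q hq1 X r mean_X, cov_X,
      real_inner_smul_left, real_inner_smul_right]
    exact sum_congr rfl fun i _ => sum_congr rfl fun j _ => by ring
  refine ⟨variance.trans ?_, ?_⟩
  · simp only [c, div_mul_div_comm]
  · have gram_symm : (Y * Y.transpose).IsSymm := by
      rw [Matrix.IsSymm, Matrix.transpose_mul, Matrix.transpose_transpose]
    rw [variance, Matrix.trace_mul_of_isSymm gram_symm]
    simp only [Matrix.mul_transpose_apply_eq_mul_inner c v hY]

/-- The client-sampling variance equals a trace of a quadratic form in the selection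
covariance:
`E_q[‖Δ(S) − v̄‖²] = Σᵢⱼ (pᵢpⱼ)/(rᵢrⱼ) ⟨vᵢ, vⱼ⟩ Σᵢⱼ = Tr(Y Yᵀ Σ)`,
where `Σᵢⱼ = E[XᵢXⱼ] − rᵢrⱼ` and `Y` has `k`-th row `(p_k/r_k) v_k`. -/
theorem stmt2 (N d : ℕ)
    (p : Fin N → ℝ) (hp0 : ∀ k, 0 ≤ p k) (hp1 : ∑ k, p k = 1)
    (q : Finset (Fin N) → ℝ) (hq0 : ∀ S, 0 ≤ q S)
    (hq1 : ∑ S : Finset (Fin N), q S = 1) (hqempty : q ∅ = 0)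
    (v : Fin N → EuclideanSpace ℝ (Fin d))
    (r : Fin N → ℝ)
    (hr : ∀ k, r k = ∑ S ∈ Finset.univ.filter (fun S : Finset (Fin N) => k ∈ S), q S)
    (hrpos : ∀ k, 0 < r k)
    (Δ : Finset (Fin N) → EuclideanSpace ℝ (Fin d))
    (hΔ : ∀ S, Δ S = ∑ k ∈ S, (p k / r k) • v k)
    (vbar : EuclideanSpace ℝ (Fin d))
    (hvbar : vbar = ∑ k, p k • v k)
    (cov : Matrix (Fin N) (Fin N) ℝ)
    (hcov : ∀ i j, cov i j =
      (∑ S ∈ Finset.univ.filter (fun S : Finset (Fin N) => i ∈ S ∧ j ∈ S), q S)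
        - r i * r j)
    (Y : Matrix (Fin N) (Fin d) ℝ)
    (hY : ∀ k l, Y k l = (p k / r k) * v k l) :
    (∑ S : Finset (Fin N), q S * ‖Δ S - vbar‖ ^ 2)
      = ∑ i, ∑ j, (p i * p j) / (r i * r j) * (inner ℝ (v i) (v j) : ℝ) * cov i j ∧
    (∑ S : Finset (Fin N), q S * ‖Δ S - vbar‖ ^ 2)
      = Matrix.trace (Y * Y.transpose * cov) :=
  stmt2_general N d p q hq1 v r hr hrpos Δ hΔ vbar hvbar cov hcov Y hY
end

section
/- Suppose the pairwise inner products of the client updates are uniformly bounded: ⟨v_i, v_j⟩ ≤ c for all i, j ∈ {1,…,N}, with c ≥ 0. Then the second moment of the importance-weighted aggregate satisfies E_q[ ‖Δ(S)‖² ] ≤ c Σ_{k=1}^N p_k/r_k, and consequently the client sampling variance satisfies E_q[ ‖Δ(S) − v̄‖² ] ≤ c Σ_{k=1}^N p_k/r_k − ‖v̄‖². -/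
/-!
Bounding every pairwise inner product by `c` gives, for each realised subset `S`,
`‖Δ(S)‖² ≤ c (Σ_{k∈S} p_k/r_k)²`, and weighted Cauchy–Schwarz together with `Σ_{k∈S} p_k ≤ 1`
turns this into `‖Δ(S)‖² ≤ c Σ_{k∈S} p_k/r_k²`. Averaging over `S` replaces the indicator of
`k ∈ S` by `r_k`, which yields `c Σ_k p_k/r_k`. The same exchange of sums shows that `Δ` is
unbiased, `E_q[Δ(S)] = v̄`, so the variance is the second moment minus `‖v̄‖²`.
-/

open Finset

section

variable {ι E : Type*} [Fintype ι] [DecidableEq ι] [AddCommMonoid E] [Module ℝ E]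

theorem sum_smul_sum_mem_eq (q : Finset ι → ℝ) (f : ι → E) :
    ∑ S, q S • ∑ k ∈ S, f k = ∑ k, (∑ S with k ∈ S, q S) • f k := by
  simp_rw [smul_sum, sum_smul]
  exact sum_comm' fun S k => by simp

end

section

variable {ι E : Type*} [NormedAddCommGroup E] [InnerProductSpace ℝ E]

theorem norm_sum_smul_sq_le_of_inner_le (s : Finset ι) {w : ι → ℝ} (hw : ∀ k ∈ s, 0 ≤ w k)
    {v : ι → E} {c : ℝ} (hinner : ∀ i ∈ s, ∀ j ∈ s, inner ℝ (v i) (v j) ≤ c) :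
    ‖∑ k ∈ s, w k • v k‖ ^ 2 ≤ c * (∑ k ∈ s, w k) ^ 2 := by
  rw [← real_inner_self_eq_norm_sq, sq, sum_mul_sum, mul_sum, sum_inner]
  refine sum_le_sum fun i hi => ?_
  rw [inner_sum, mul_sum]
  refine sum_le_sum fun j hj => ?_
  rw [real_inner_smul_left, real_inner_smul_right, ← mul_assoc, mul_comm c]
  exact mul_le_mul_of_nonneg_left (hinner i hi j hj) (mul_nonneg (hw i hi) (hw j hj))

theorem sum_mul_norm_sub_sq_eq {Ω : Type*} [Fintype Ω] {q : Ω → ℝ} (hq : ∑ ω, q ω = 1)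
    {X : Ω → E} {μ : E} (hmean : ∑ ω, q ω • X ω = μ) :
    ∑ ω, q ω * ‖X ω - μ‖ ^ 2 = ∑ ω, q ω * ‖X ω‖ ^ 2 - ‖μ‖ ^ 2 := by
  have hcross : ∑ ω, q ω * inner ℝ (X ω) μ = ‖μ‖ ^ 2 := by
    simp_rw [← real_inner_smul_left, ← sum_inner, hmean, real_inner_self_eq_norm_sq]
  simp_rw [norm_sub_sq_real, mul_add, mul_sub, sum_add_distrib, sum_sub_distrib, ← sum_mul, hq,
    mul_left_comm _ (2 : ℝ), ← mul_sum, hcross]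
  ring

end

theorem sq_sum_div_le_sum_div_sq {ι : Type*} (s : Finset ι) {p r : ι → ℝ}
    (hp0 : ∀ k ∈ s, 0 ≤ p k) (hp1 : ∑ k ∈ s, p k ≤ 1) :
    (∑ k ∈ s, p k / r k) ^ 2 ≤ ∑ k ∈ s, p k / r k ^ 2 := by
  have hcs : (∑ k ∈ s, p k / r k) ^ 2 ≤ (∑ k ∈ s, p k) * ∑ k ∈ s, p k / r k ^ 2 :=
    sum_sq_le_sum_mul_sum_of_sq_le_mul s hp0
      (fun k hk => div_nonneg (hp0 k hk) (sq_nonneg _))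
      (fun k _ => by rw [div_pow, ← mul_div_assoc, sq])
  have hnonneg : 0 ≤ ∑ k ∈ s, p k / r k ^ 2 :=
    sum_nonneg fun k hk => div_nonneg (hp0 k hk) (sq_nonneg _)
  exact hcs.trans (mul_le_of_le_one_left hnonneg hp1)

theorem stmt5_general (N d : ℕ)
    (p : Fin N → ℝ) (hp0 : ∀ k, 0 ≤ p k) (hp1 : ∑ k, p k = 1)
    (q : Finset (Fin N) → ℝ) (hq0 : ∀ S, 0 ≤ q S)
    (hq1 : ∑ S : Finset (Fin N), q S = 1)
    (v : Fin N → EuclideanSpace ℝ (Fin d))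
    (r : Fin N → ℝ)
    (hr : ∀ k, r k = ∑ S ∈ Finset.univ.filter (fun S : Finset (Fin N) => k ∈ S), q S)
    (hrpos : ∀ k, 0 < r k)
    (Δ : Finset (Fin N) → EuclideanSpace ℝ (Fin d))
    (hΔ : ∀ S, Δ S = ∑ k ∈ S, (p k / r k) • v k)
    (vbar : EuclideanSpace ℝ (Fin d))
    (hvbar : vbar = ∑ k, p k • v k)
    (c : ℝ) (hc : 0 ≤ c)
    (hinner : ∀ i j, (inner ℝ (v i) (v j) : ℝ) ≤ c) :
    (∑ S : Finset (Fin N), q S * ‖Δ S‖ ^ 2) ≤ c * ∑ k, p k / r k ∧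
    (∑ S : Finset (Fin N), q S * ‖Δ S - vbar‖ ^ 2)
      ≤ c * (∑ k, p k / r k) - ‖vbar‖ ^ 2 := by
  have hpointwise : ∀ S, ‖Δ S‖ ^ 2 ≤ c * ∑ k ∈ S, p k / r k ^ 2 := fun S => by
    rw [hΔ]
    refine (norm_sum_smul_sq_le_of_inner_le S (fun k _ => div_nonneg (hp0 k) (hrpos k).le)
      fun i _ j _ => hinner i j).trans (mul_le_mul_of_nonneg_left ?_ hc)
    exact sq_sum_div_le_sum_div_sq S (fun k _ => hp0 k)
      (hp1 ▸ sum_le_sum_of_subset_of_nonneg (subset_univ S) fun k _ _ => hp0 k)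
  have hmoment : ∑ S, q S * ‖Δ S‖ ^ 2 ≤ c * ∑ k, p k / r k :=
    calc ∑ S, q S * ‖Δ S‖ ^ 2 ≤ c * ∑ S, q S • ∑ k ∈ S, p k / r k ^ 2 := by
          rw [mul_sum]
          exact sum_le_sum fun S _ => by
            rw [smul_eq_mul, mul_left_comm]; exact mul_le_mul_of_nonneg_left (hpointwise S) (hq0 S)
      _ = c * ∑ k, p k / r k := by
          rw [sum_smul_sum_mem_eq]
          refine congrArg _ (sum_congr rfl fun k _ => ?_)
          rw [← hr, smul_eq_mul]
          field_simp [(hrpos k).ne']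
  have hmean : ∑ S, q S • Δ S = vbar := by
    simp_rw [hΔ, sum_smul_sum_mem_eq, ← hr, smul_smul, hvbar]
    exact sum_congr rfl fun k _ => by rw [mul_div_cancel₀ _ (hrpos k).ne']
  exact ⟨hmoment, (sum_mul_norm_sub_sq_eq hq1 hmean).trans_le (by linarith)⟩

/-- If pairwise inner products of client updates are uniformly bounded by `c ≥ 0`,
then `E_q[‖Δ(S)‖²] ≤ c Σ_k p_k/r_k` and
`E_q[‖Δ(S) − v̄‖²] ≤ c Σ_k p_k/r_k − ‖v̄‖²`. -/
theorem stmt5 (N d : ℕ)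
    (p : Fin N → ℝ) (hp0 : ∀ k, 0 ≤ p k) (hp1 : ∑ k, p k = 1)
    (q : Finset (Fin N) → ℝ) (hq0 : ∀ S, 0 ≤ q S)
    (hq1 : ∑ S : Finset (Fin N), q S = 1) (hqempty : q ∅ = 0)
    (v : Fin N → EuclideanSpace ℝ (Fin d))
    (r : Fin N → ℝ)
    (hr : ∀ k, r k = ∑ S ∈ Finset.univ.filter (fun S : Finset (Fin N) => k ∈ S), q S)
    (hrpos : ∀ k, 0 < r k)
    (Δ : Finset (Fin N) → EuclideanSpace ℝ (Fin d))
    (hΔ : ∀ S, Δ S = ∑ k ∈ S, (p k / r k) • v k)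
    (vbar : EuclideanSpace ℝ (Fin d))
    (hvbar : vbar = ∑ k, p k • v k)
    (c : ℝ) (hc : 0 ≤ c)
    (hinner : ∀ i j, (inner ℝ (v i) (v j) : ℝ) ≤ c) :
    (∑ S : Finset (Fin N), q S * ‖Δ S‖ ^ 2) ≤ c * ∑ k, p k / r k ∧
    (∑ S : Finset (Fin N), q S * ‖Δ S - vbar‖ ^ 2)
      ≤ c * (∑ k, p k / r k) - ‖vbar‖ ^ 2 :=
  stmt5_general N d p hp0 hp1 q hq0 hq1 v r hr hrpos Δ hΔ vbar hvbar c hc hinner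
end

section
/- Suppose ‖v_k‖² ≤ c for every client k (with c ≥ 0), that the pairwise inner products of updates are nonnegative (⟨v_i, v_j⟩ ≥ 0 for all i ≠ j), and that the selection indicators are pairwise uncorrelated or negatively correlated, i.e., Cov(X_i, X_j) = E[X_i X_j] − r_i r_j ≤ 0 for all i ≠ j. Then the client sampling variance satisfies E_q[ ‖Δ(S) − v̄‖² ] ≤ c ( Σ_{k=1}^N p_k²/r_k + Σ_{k=1}^N p_k² ). -/
/-!
Writing `Δ(S) - v̄ = ∑ₖ (pₖ/rₖ) (Xₖ - rₖ) vₖ` and expanding the square, the expected squared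
deviation is `∑ᵢ ∑ⱼ (pᵢ/rᵢ)(pⱼ/rⱼ) Cov(Xᵢ, Xⱼ) ⟪vᵢ, vⱼ⟫`. Off the diagonal every term is
`≤ 0` (nonnegative weights and inner products, nonpositive covariances), and on the diagonal
`Cov(Xₖ, Xₖ) = rₖ - rₖ²` because `Xₖ² = Xₖ`, which leaves `∑ₖ pₖ² (1/rₖ - 1) ‖vₖ‖²`.
-/

open Finset RealInnerProductSpace

section WeightedSums

variable {Ω : Type*} [Fintype Ω] (q : Ω → ℝ)

theorem sum_mul_norm_sum_smul_sq {ι E : Type*} [Fintype ι] [NormedAddCommGroup E]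
    [InnerProductSpace ℝ E] (a : ι → Ω → ℝ) (v : ι → E) :
    ∑ ω, q ω * ‖∑ i, a i ω • v i‖ ^ 2 =
      ∑ i, ∑ j, (∑ ω, q ω * (a i ω * a j ω)) * ⟪v i, v j⟫ := by
  simp_rw [← real_inner_self_eq_norm_sq, sum_inner, inner_sum, real_inner_smul_left,
    real_inner_smul_right, mul_sum, sum_mul]
  rw [sum_comm]
  refine sum_congr rfl fun i _ => ?_
  rw [sum_comm]
  exact sum_congr rfl fun j _ => sum_congr rfl fun ω _ => by ring

theorem sum_mul_sub_mean_mul_sub_mean (hq : ∑ ω, q ω = 1) (f g : Ω → ℝ) :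
    ∑ ω, q ω * ((f ω - ∑ ω', q ω' * f ω') * (g ω - ∑ ω', q ω' * g ω')) =
      ∑ ω, q ω * (f ω * g ω) - (∑ ω, q ω * f ω) * ∑ ω, q ω * g ω := by
  set μf := ∑ ω, q ω * f ω
  set μg := ∑ ω, q ω * g ω
  have expand : ∀ ω, q ω * ((f ω - μf) * (g ω - μg)) =
      q ω * (f ω * g ω) - μg * (q ω * f ω) - μf * (q ω * g ω) + μf * μg * q ω :=
    fun ω => by ring
  simp_rw [expand, sum_add_distrib, sum_sub_distrib, ← mul_sum, hq]
  ring

end WeightedSums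

theorem sum_sum_le_sum_diag {ι : Type*} [Fintype ι] (t : ι → ι → ℝ)
    (ht : ∀ i j, i ≠ j → t i j ≤ 0) : ∑ i, ∑ j, t i j ≤ ∑ i, t i i := by
  classical
  refine sum_le_sum fun i _ => ?_
  rw [← add_sum_erase _ _ (mem_univ i)]
  exact add_le_of_nonpos_right (sum_nonpos fun j hj => ht i j (ne_of_mem_erase hj).symm)

theorem sum_mul_norm_importance_weighted_sub_sq {ι E : Type*} [Fintype ι] [DecidableEq ι]
    [NormedAddCommGroup E] [InnerProductSpace ℝ E] (q : Finset ι → ℝ) (hq : ∑ S, q S = 1)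
    (p r : ι → ℝ) (hr : ∀ k, r k = ∑ S with k ∈ S, q S) (hr0 : ∀ k, r k ≠ 0) (v : ι → E) :
    ∑ S, q S * ‖∑ k ∈ S, (p k / r k) • v k - ∑ k, p k • v k‖ ^ 2 =
      ∑ i, ∑ j, p i / r i * (p j / r j) * ((∑ S with i ∈ S ∧ j ∈ S, q S) - r i * r j) *
        ⟪v i, v j⟫ := by
  set X : ι → Finset ι → ℝ := fun k S => if k ∈ S then 1 else 0
  have hmean : ∀ k, ∑ S, q S * X k S = r k := fun k => by
    simp only [X, hr, sum_filter, mul_boole]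
  have hpair : ∀ i j, ∑ S, q S * (X i S * X j S) = ∑ S with i ∈ S ∧ j ∈ S, q S := fun i j => by
    simp only [X, ite_zero_mul_ite_zero, mul_one]
    simp only [sum_filter, mul_boole]
  have hdev : ∀ S, ∑ k ∈ S, (p k / r k) • v k - ∑ k, p k • v k =
      ∑ k, (p k / r k * (X k S - r k)) • v k := fun S => by
    simp_rw [mul_sub, sub_smul, sum_sub_distrib, div_mul_cancel₀ _ (hr0 _), X, mul_ite,
      mul_one, mul_zero, ite_smul, zero_smul, sum_ite_mem, univ_inter]
  simp_rw [hdev, sum_mul_norm_sum_smul_sq]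
  refine sum_congr rfl fun i _ => sum_congr rfl fun j _ => ?_
  have hcov := sum_mul_sub_mean_mul_sub_mean q hq (X i) (X j)
  rw [hmean, hmean, hpair] at hcov
  rw [← hcov, mul_sum, sum_mul, sum_mul]
  exact sum_congr rfl fun S _ => by ring

theorem weighted_bernoulli_variance_le {p r a c : ℝ} (hr : 0 < r) (ha : 0 ≤ a) (hac : a ≤ c) :
    p / r * (p / r) * (r - r * r) * a ≤ c * (p ^ 2 / r + p ^ 2) := by
  have hsplit : p / r * (p / r) * (r - r * r) * a = p ^ 2 / r * a - p ^ 2 * a := by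
    field_simp
  have := mul_le_mul_of_nonneg_left hac (div_nonneg (sq_nonneg p) hr.le)
  linarith [mul_nonneg (sq_nonneg p) ha, mul_nonneg (sq_nonneg p) (ha.trans hac)]

theorem stmt6_general (N d : ℕ)
    (p : Fin N → ℝ) (hp0 : ∀ k, 0 ≤ p k)
    (q : Finset (Fin N) → ℝ)
    (hq1 : ∑ S : Finset (Fin N), q S = 1)
    (v : Fin N → EuclideanSpace ℝ (Fin d))
    (r : Fin N → ℝ)
    (hr : ∀ k, r k = ∑ S ∈ Finset.univ.filter (fun S : Finset (Fin N) => k ∈ S), q S)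
    (hrpos : ∀ k, 0 < r k)
    (Δ : Finset (Fin N) → EuclideanSpace ℝ (Fin d))
    (hΔ : ∀ S, Δ S = ∑ k ∈ S, (p k / r k) • v k)
    (vbar : EuclideanSpace ℝ (Fin d))
    (hvbar : vbar = ∑ k, p k • v k)
    (c : ℝ)
    (hvnorm : ∀ k, ‖v k‖ ^ 2 ≤ c)
    (hinner : ∀ i j, i ≠ j → 0 ≤ (inner ℝ (v i) (v j) : ℝ))
    (hcov : ∀ i j, i ≠ j →
      (∑ S ∈ Finset.univ.filter (fun S : Finset (Fin N) => i ∈ S ∧ j ∈ S), q S)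
        - r i * r j ≤ 0) :
    (∑ S : Finset (Fin N), q S * ‖Δ S - vbar‖ ^ 2)
      ≤ c * ((∑ k, p k ^ 2 / r k) + ∑ k, p k ^ 2) := by
  have hw : ∀ k, 0 ≤ p k / r k := fun k => div_nonneg (hp0 k) (hrpos k).le
  have hdiag : ∀ k, (∑ S with k ∈ S ∧ k ∈ S, q S) = r k := fun k => by simp only [and_self, hr]
  simp_rw [hΔ, hvbar,
    sum_mul_norm_importance_weighted_sub_sq q hq1 p r hr (fun k => (hrpos k).ne') v]
  calc _ ≤ ∑ k, p k / r k * (p k / r k) * ((∑ S with k ∈ S ∧ k ∈ S, q S) - r k * r k) *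
          ⟪v k, v k⟫ :=
        sum_sum_le_sum_diag _ fun i j hij => mul_nonpos_of_nonpos_of_nonneg
          (mul_nonpos_of_nonneg_of_nonpos (mul_nonneg (hw i) (hw j)) (hcov i j hij))
          (hinner i j hij)
    _ ≤ ∑ k, c * (p k ^ 2 / r k + p k ^ 2) := sum_le_sum fun k _ => by
        rw [hdiag, real_inner_self_eq_norm_sq]
        exact weighted_bernoulli_variance_le (hrpos k) (sq_nonneg _) (hvnorm k)
    _ = c * ((∑ k, p k ^ 2 / r k) + ∑ k, p k ^ 2) := by rw [← mul_sum, sum_add_distrib]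

/-- If `‖v_k‖² ≤ c`, pairwise inner products of updates are nonnegative for `i ≠ j`,
and selection indicators are pairwise uncorrelated or negatively correlated
(`E[XᵢXⱼ] − rᵢrⱼ ≤ 0` for `i ≠ j`), then
`E_q[‖Δ(S) − v̄‖²] ≤ c (Σ_k p_k²/r_k + Σ_k p_k²)`. -/
theorem stmt6 (N d : ℕ)
    (p : Fin N → ℝ) (hp0 : ∀ k, 0 ≤ p k) (hp1 : ∑ k, p k = 1)
    (q : Finset (Fin N) → ℝ) (hq0 : ∀ S, 0 ≤ q S)
    (hq1 : ∑ S : Finset (Fin N), q S = 1) (hqempty : q ∅ = 0)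
    (v : Fin N → EuclideanSpace ℝ (Fin d))
    (r : Fin N → ℝ)
    (hr : ∀ k, r k = ∑ S ∈ Finset.univ.filter (fun S : Finset (Fin N) => k ∈ S), q S)
    (hrpos : ∀ k, 0 < r k)
    (Δ : Finset (Fin N) → EuclideanSpace ℝ (Fin d))
    (hΔ : ∀ S, Δ S = ∑ k ∈ S, (p k / r k) • v k)
    (vbar : EuclideanSpace ℝ (Fin d))
    (hvbar : vbar = ∑ k, p k • v k)
    (c : ℝ) (hc : 0 ≤ c)
    (hvnorm : ∀ k, ‖v k‖ ^ 2 ≤ c)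
    (hinner : ∀ i j, i ≠ j → 0 ≤ (inner ℝ (v i) (v j) : ℝ))
    (hcov : ∀ i j, i ≠ j →
      (∑ S ∈ Finset.univ.filter (fun S : Finset (Fin N) => i ∈ S ∧ j ∈ S), q S)
        - r i * r j ≤ 0) :
    (∑ S : Finset (Fin N), q S * ‖Δ S - vbar‖ ^ 2)
      ≤ c * ((∑ k, p k ^ 2 / r k) + ∑ k, p k ^ 2) :=
  stmt6_general N d p hp0 q hq1 v r hr hrpos Δ hΔ vbar hvbar c hvnorm hinner hcov
end

section
/- Let E ≥ 1, γ > 0, β > 0, μ > 0 and B ≥ 0 be real constants with βμ > E and βμ ≤ γ + E. Let (a_t)_{t ≥ 1} be a sequence of nonnegative reals satisfying, for all t ≥ 1, a_{t+1} ≤ (1 − βμ/(tE + γ)) a_t + β² B/(tE + γ)². Then, with v = max{ β² B/(βμ − E), (γ + E) a_1 }, one has a_t ≤ v/(γ + tE) for all t ≥ 1. -/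
/-!
Induction on `t` with the invariant `a_t ≤ v / D_t`, where `D_t = tE + γ`. The step reduces to
`(D - βμ) v + β²B ≤ (D - E) v` (this is where `v ≥ β²B/(βμ - E)` enters) and to
`(D - E)(D + E) ≤ D²`; the condition `βμ ≤ γ + E` keeps the contraction factor `1 - βμ/D` nonnegative.
-/

theorem one_sub_div_mul_div_add_div_sq_le {D E c b v : ℝ} (hD : 0 < D) (hDE : 0 < D + E)
    (hv : 0 ≤ v) (hb : b ≤ v * (c - E)) :
    (1 - c / D) * (v / D) + b / D ^ 2 ≤ v / (D + E) :=
  calc (1 - c / D) * (v / D) + b / D ^ 2 = ((D - c) * v + b) / D ^ 2 := by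
        field_simp
    _ ≤ (D - E) * v / D ^ 2 := by gcongr; linarith
    _ ≤ v / (D + E) := by
        rw [div_le_div_iff₀ (by positivity) hDE]
        nlinarith [mul_nonneg hv (sq_nonneg E)]

theorem le_div_add_of_le_one_sub_div_mul_add {D E c b v x y : ℝ} (hE : 0 ≤ E) (hEc : E < c)
    (hcD : c ≤ D) (hv : 0 ≤ v) (hb : b ≤ v * (c - E)) (hx : x ≤ v / D)
    (hy : y ≤ (1 - c / D) * x + b / D ^ 2) :
    y ≤ v / (D + E) := by
  have hD : 0 < D := by linarith
  have hfactor : 0 ≤ 1 - c / D := sub_nonneg.mpr ((div_le_one hD).mpr hcD)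
  calc y ≤ (1 - c / D) * x + b / D ^ 2 := hy
    _ ≤ (1 - c / D) * (v / D) + b / D ^ 2 := by gcongr
    _ ≤ v / (D + E) := one_sub_div_mul_div_add_div_sq_le hD (by linarith) hv hb

theorem stmt9_general (E γ β μ B : ℝ)
    (hE : 1 ≤ E) (hB : 0 ≤ B)
    (hβμ : E < β * μ) (hβμ' : β * μ ≤ γ + E)
    (a : ℕ → ℝ)
    (hrec : ∀ t : ℕ, 1 ≤ t →
      a (t + 1) ≤ (1 - β * μ / ((t : ℝ) * E + γ)) * a t
        + β ^ 2 * B / ((t : ℝ) * E + γ) ^ 2) :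
    ∀ t : ℕ, 1 ≤ t →
      a t ≤ max (β ^ 2 * B / (β * μ - E)) ((γ + E) * a 1) / (γ + (t : ℝ) * E) := by
  set v := max (β ^ 2 * B / (β * μ - E)) ((γ + E) * a 1)
  have hgap : 0 < β * μ - E := sub_pos.mpr hβμ
  have hv : 0 ≤ v := le_max_of_le_left (by positivity)
  have hvB : β ^ 2 * B ≤ v * (β * μ - E) := (div_le_iff₀ hgap).mp (le_max_left _ _)
  intro t ht
  induction t, ht using Nat.le_induction with
  | base =>
    rw [Nat.cast_one, one_mul, le_div_iff₀ (by linarith), mul_comm]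
    exact le_max_right _ _
  | succ t ht ih =>
    have ht' : (1 : ℝ) ≤ t := by exact_mod_cast ht
    have hcD : β * μ ≤ t * E + γ := by nlinarith
    have hnext := le_div_add_of_le_one_sub_div_mul_add (by linarith) hβμ hcD hv hvB
      (by rwa [add_comm] at ih) (hrec t ht)
    convert hnext using 2
    push_cast
    ring

/-- Stochastic-approximation recursion: if `a_{t+1} ≤ (1 − βμ/(tE+γ)) a_t + β²B/(tE+γ)²`
for all `t ≥ 1`, with `βμ > E` and `βμ ≤ γ + E`, then
`a_t ≤ v/(γ + tE)` for all `t ≥ 1`, where `v = max{β²B/(βμ−E), (γ+E)a_1}`. -/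
theorem stmt9 (E γ β μ B : ℝ)
    (hE : 1 ≤ E) (hγ : 0 < γ) (hβ : 0 < β) (hμ : 0 < μ) (hB : 0 ≤ B)
    (hβμ : E < β * μ) (hβμ' : β * μ ≤ γ + E)
    (a : ℕ → ℝ) (ha0 : ∀ t, 1 ≤ t → 0 ≤ a t)
    (hrec : ∀ t : ℕ, 1 ≤ t →
      a (t + 1) ≤ (1 - β * μ / ((t : ℝ) * E + γ)) * a t
        + β ^ 2 * B / ((t : ℝ) * E + γ) ^ 2) :
    ∀ t : ℕ, 1 ≤ t →
      a t ≤ max (β ^ 2 * B / (β * μ - E)) ((γ + E) * a 1) / (γ + (t : ℝ) * E) :=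
  stmt9_general E γ β μ B hE hB hβμ hβμ' a hrec
end
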